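/- If N is a prime number, then the defect of the Fourier matrix F_N equals zero, i.e. every N×N real matrix R with R_{1j} = 0 for all j, R_{i1} = 0 for all i, and ∑_{k=1}^{N} (F_N)_{ik}·conj((F_N)_{jk})·(R_{ik} − R_{jk}) = 0 for all 1 ≤ i < j ≤ N is the zero matrix. -/

import Mathlib

/-- The (rescaled) Fourier matrix of order `N`, with entries
`exp(2πi·j·k/N)` for `j, k ∈ {0, …, N-1}`. -/
noncomputable def FourierMatrix (N : ℕ) : Matrix (Fin N) (Fin N) ℂ :=
  Matrix.of fun j k =>
    Complex.exp (2 * (Real.pi : ℂ) * Complex.I * ((j : ℕ) : ℂ) * ((k : ℕ) : ℂ) / (N : ℂ))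

/-- If `N` is prime then the defect of the Fourier matrix `F_N` is zero,
i.e. every real matrix `R` vanishing on the first row and first column and satisfying
`∑_k (F_N)_ik · conj((F_N)_jk) · (R_ik − R_jk) = 0` for all `i < j` is the zero matrix. -/
theorem fourier_defect_zero_of_prime (N : ℕ) (hN : N.Prime)
    (R : Matrix (Fin N) (Fin N) ℝ)
    (hrow : ∀ j : Fin N, R ⟨0, hN.pos⟩ j = 0)
    (hcol : ∀ i : Fin N, R i ⟨0, hN.pos⟩ = 0)
    (horth : ∀ i j : Fin N, i < j →
      ∑ k : Fin N, FourierMatrix N i k * (starRingEnd ℂ) (FourierMatrix N j k) *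
        (((R i k : ℝ) : ℂ) - ((R j k : ℝ) : ℂ)) = 0) :
    R = 0 := by
  haveI : Fact N.Prime := ⟨hN⟩
  haveI : NeZero N := ⟨hN.ne_zero⟩
  have hNC : (N : ℂ) ≠ 0 := Nat.cast_ne_zero.mpr hN.ne_zero
  set ζ : ℂ := Complex.exp (2 * Real.pi * Complex.I / N) with hζdef
  have hζprim : IsPrimitiveRoot ζ N := Complex.isPrimitiveRoot_exp N hN.ne_zero
  have hζ0 : ζ ≠ 0 := Complex.exp_ne_zero _
  have hζone : ∀ m : ℤ, (N : ℤ) ∣ m → ζ ^ m = 1 := fun m hm =>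
    (hζprim.zpow_eq_one_iff_dvd m).mpr hm
  have hζnone : ∀ m : ℤ, ¬(N : ℤ) ∣ m → ζ ^ m ≠ 1 := fun m hm h =>
    hm ((hζprim.zpow_eq_one_iff_dvd m).mp h)
  -- entry formula
  have hF : ∀ j k : Fin N, FourierMatrix N j k = ζ ^ (((j : ℕ) : ℤ) * ((k : ℕ) : ℤ)) := by
    intro j k
    rw [FourierMatrix]
    simp only [Matrix.of_apply]
    rw [hζdef, ← Complex.exp_int_mul]
    congr 1
    push_cast
    field_simp
  have hconjζ : (starRingEnd ℂ) ζ = ζ⁻¹ := by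
    rw [hζdef, ← Complex.exp_conj, ← Complex.exp_neg]
    congr 1
    simp [map_div₀, Complex.conj_I, map_ofNat]
    ring
  have hFc : ∀ j k : Fin N,
      (starRingEnd ℂ) (FourierMatrix N j k) = ζ ^ (-(((j : ℕ) : ℤ) * ((k : ℕ) : ℤ))) := by
    intro j k
    rw [hF, map_zpow₀, hconjζ, inv_zpow, ← zpow_neg]
  -- the Fourier transform of the rows
  set S : Fin N → ℤ → ℂ :=
    fun i d => ∑ k : Fin N, ζ ^ (d * ((k : ℕ) : ℤ)) * ((R i k : ℝ) : ℂ) with hSdef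
  -- conjugation flips the frequency
  have hSconj : ∀ (i : Fin N) (d : ℤ), (starRingEnd ℂ) (S i d) = S i (-d) := by
    intro i d
    rw [hSdef]
    simp only [map_sum, map_mul, map_zpow₀, hconjζ, inv_zpow, ← zpow_neg,
      Complex.conj_ofReal, neg_mul]
  -- periodicity in the frequency
  have hSper : ∀ (i : Fin N) (d d' : ℤ), (N : ℤ) ∣ d - d' → S i d = S i d' := by
    intro i d d' hdvd
    rw [hSdef]
    refine Finset.sum_congr rfl fun k _ => ?_
    congr 1
    have h1 : ζ ^ ((d - d') * ((k : ℕ) : ℤ)) = 1 :=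
      hζone _ (Dvd.dvd.mul_right hdvd _)
    calc ζ ^ (d * ((k : ℕ) : ℤ))
        = ζ ^ ((d - d') * ((k : ℕ) : ℤ) + d' * ((k : ℕ) : ℤ)) := by ring_nf
      _ = ζ ^ ((d - d') * ((k : ℕ) : ℤ)) * ζ ^ (d' * ((k : ℕ) : ℤ)) := zpow_add₀ hζ0 _ _
      _ = ζ ^ (d' * ((k : ℕ) : ℤ)) := by rw [h1, one_mul]
  -- the first row transform vanishes
  have hS0 : ∀ d : ℤ, S ⟨0, hN.pos⟩ d = 0 := by
    intro d
    rw [hSdef]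
    simp only [hrow, Complex.ofReal_zero, mul_zero, Finset.sum_const_zero]
  -- orthogonality relations in terms of S
  have hstep : ∀ i j : Fin N, i ≠ j →
      S i (((i : ℕ) : ℤ) - ((j : ℕ) : ℤ)) = S j (((i : ℕ) : ℤ) - ((j : ℕ) : ℤ)) := by
    have main : ∀ i j : Fin N, i < j →
        S i (((i : ℕ) : ℤ) - ((j : ℕ) : ℤ)) = S j (((i : ℕ) : ℤ) - ((j : ℕ) : ℤ)) := by
      intro i j hij
      have h := horth i j hij
      have expand : ∑ k : Fin N, FourierMatrix N i k * (starRingEnd ℂ) (FourierMatrix N j k) *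
          (((R i k : ℝ) : ℂ) - ((R j k : ℝ) : ℂ)) =
          S i (((i : ℕ) : ℤ) - ((j : ℕ) : ℤ)) - S j (((i : ℕ) : ℤ) - ((j : ℕ) : ℤ)) := by
        rw [hSdef]
        simp only
        rw [← Finset.sum_sub_distrib]
        refine Finset.sum_congr rfl fun k _ => ?_
        rw [hF, hFc, ← zpow_add₀ hζ0]
        have he : ((i : ℕ) : ℤ) * ((k : ℕ) : ℤ) + -(((j : ℕ) : ℤ) * ((k : ℕ) : ℤ))
            = (((i : ℕ) : ℤ) - ((j : ℕ) : ℤ)) * ((k : ℕ) : ℤ) := by ring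
        rw [he]
        ring
      rw [expand] at h
      exact sub_eq_zero.mp h
    intro i j hij
    rcases lt_or_gt_of_ne hij with h | h
    · exact main i j h
    · have := main j i h
      have h2 := congrArg (starRingEnd ℂ) this
      rw [hSconj, hSconj] at h2
      have h3 : -(((j : ℕ) : ℤ) - ((i : ℕ) : ℤ)) = ((i : ℕ) : ℤ) - ((j : ℕ) : ℤ) := by ring
      rw [h3] at h2
      exact h2.symm
  -- the transform vanishes at all nonzero frequencies
  have hSzero : ∀ (i : Fin N) (d : ℤ), ¬(N : ℤ) ∣ d → S i d = 0 := by
    intro i d hd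
    set idx : ZMod N → Fin N := fun a => ⟨a.val, a.val_lt⟩ with hidx
    set δ : ZMod N := (d : ZMod N) with hδdef
    have hδ : δ ≠ 0 := by
      rw [hδdef, Ne, ZMod.intCast_zmod_eq_zero_iff_dvd]
      exact hd
    have hvalcast : ∀ a : ZMod N, (((idx a : Fin N) : ℕ) : ZMod N) = a := by
      intro a
      show ((a.val : ℕ) : ZMod N) = a
      rw [ZMod.natCast_val, ZMod.cast_id]
    have step' : ∀ b : ZMod N, S (idx b) d = S (idx (b - δ)) d := by
      intro b
      have hne : idx b ≠ idx (b - δ) := by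
        intro hcontra
        have : b = b - δ := by
          have hv : b.val = (b - δ).val := congrArg Fin.val hcontra
          exact ZMod.val_injective N hv
        have : δ = 0 := by linear_combination this
        exact hδ this
      have h := hstep (idx b) (idx (b - δ)) hne
      have hper1 : S (idx b) (((idx b : Fin N) : ℕ) - (((idx (b - δ) : Fin N) : ℕ) : ℤ)) =
          S (idx b) d := by
        apply hSper
        have : (((((idx b : Fin N) : ℕ) : ℤ) - (((idx (b - δ) : Fin N) : ℕ) : ℤ) - d : ℤ) :
            ZMod N) = 0 := by
          push_cast
          rw [hvalcast, hvalcast]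
          rw [← hδdef]
          ring
        exact (ZMod.intCast_zmod_eq_zero_iff_dvd _ N).mp this
      have hper2 : S (idx (b - δ)) (((idx b : Fin N) : ℕ) - (((idx (b - δ) : Fin N) : ℕ) : ℤ)) =
          S (idx (b - δ)) d := by
        apply hSper
        have : (((((idx b : Fin N) : ℕ) : ℤ) - (((idx (b - δ) : Fin N) : ℕ) : ℤ) - d : ℤ) :
            ZMod N) = 0 := by
          push_cast
          rw [hvalcast, hvalcast]
          rw [← hδdef]
          ring
        exact (ZMod.intCast_zmod_eq_zero_iff_dvd _ N).mp this
      rw [← hper1, ← hper2]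
      exact h
    have hiter : ∀ m : ℕ, S (idx ((m : ZMod N) * δ)) d = S (idx 0) d := by
      intro m
      induction m with
      | zero => norm_num
      | succ n ih =>
        have h1 : ((n + 1 : ℕ) : ZMod N) * δ = ((n : ℕ) : ZMod N) * δ + δ := by
          push_cast
          ring
        have h2 := step' (((n + 1 : ℕ) : ZMod N) * δ)
        rw [h1] at h2 ⊢
        rw [add_sub_cancel_right] at h2
        rw [h2]
        exact ih
    set a : ZMod N := ((i : ℕ) : ZMod N) with hadef
    have hidxa : idx a = i := by
      apply Fin.ext
      show a.val = (i : ℕ)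
      rw [hadef, ZMod.val_natCast_of_lt i.isLt]
    have hrepr : ((((a * δ⁻¹).val : ℕ) : ZMod N) * δ) = a := by
      rw [ZMod.natCast_val, ZMod.cast_id]
      field_simp
    have := hiter (a * δ⁻¹).val
    rw [hrepr, hidxa] at this
    have hidx0 : idx 0 = ⟨0, hN.pos⟩ := by
      apply Fin.ext
      show (0 : ZMod N).val = 0
      exact ZMod.val_zero
    rw [this, hidx0, hS0]
  -- the geometric sum
  have hgeom : ∀ m : ℤ, ∑ d : Fin N, ζ ^ (m * ((d : ℕ) : ℤ)) =
      if (N : ℤ) ∣ m then (N : ℂ) else 0 := by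
    intro m
    by_cases hm : (N : ℤ) ∣ m
    · rw [if_pos hm]
      have : ∀ d : Fin N, ζ ^ (m * ((d : ℕ) : ℤ)) = 1 := fun d =>
        hζone _ (Dvd.dvd.mul_right hm _)
      simp [this]
    · rw [if_neg hm]
      have hz : ζ ^ m ≠ 1 := hζnone m hm
      have hterm : ∀ d : Fin N, ζ ^ (m * ((d : ℕ) : ℤ)) = (ζ ^ m) ^ (d : ℕ) := by
        intro d
        rw [zpow_mul, zpow_natCast]
      rw [Finset.sum_congr rfl fun d _ => hterm d]
      rw [Fin.sum_univ_eq_sum_range (fun n => (ζ ^ m) ^ n) N]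
      rw [geom_sum_eq hz]
      have : (ζ ^ m) ^ N = 1 := by
        rw [← zpow_natCast, ← zpow_mul]
        exact hζone _ (dvd_mul_left _ _)
      rw [this, sub_self, zero_div]
  -- divisibility of differences of indices
  have hdvd_iff : ∀ k k' : Fin N, (N : ℤ) ∣ (((k : ℕ) : ℤ) - ((k' : ℕ) : ℤ)) ↔ k = k' := by
    intro k k'
    constructor
    · intro h
      have h0 : ((((k : ℕ) : ℤ) - ((k' : ℕ) : ℤ) : ℤ) : ZMod N) = 0 :=
        (ZMod.intCast_zmod_eq_zero_iff_dvd _ N).mpr h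
      push_cast at h0
      have : ((k : ℕ) : ZMod N) = ((k' : ℕ) : ZMod N) := by linear_combination h0
      apply Fin.ext
      have := congrArg ZMod.val this
      rwa [ZMod.val_natCast_of_lt k.isLt, ZMod.val_natCast_of_lt k'.isLt] at this
    · rintro rfl
      simp
  -- Fourier inversion
  have key : ∀ (i : Fin N) (k' : Fin N),
      ∑ d : Fin N, ζ ^ (-(((d : ℕ) : ℤ) * ((k' : ℕ) : ℤ))) * S i ((d : ℕ) : ℤ) =
        (N : ℂ) * ((R i k' : ℝ) : ℂ) := by
    intro i k'
    rw [hSdef]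
    simp only [Finset.mul_sum]
    rw [Finset.sum_comm]
    have inner : ∀ k : Fin N,
        ∑ d : Fin N, ζ ^ (-(((d : ℕ) : ℤ) * ((k' : ℕ) : ℤ))) *
          (ζ ^ (((d : ℕ) : ℤ) * ((k : ℕ) : ℤ)) * ((R i k : ℝ) : ℂ)) =
        ((R i k : ℝ) : ℂ) * (if (N : ℤ) ∣ (((k : ℕ) : ℤ) - ((k' : ℕ) : ℤ)) then (N : ℂ) else 0) := by
      intro k
      rw [← hgeom, Finset.mul_sum]
      refine Finset.sum_congr rfl fun d _ => ?_
      have he2 : -(((d : ℕ) : ℤ) * ((k' : ℕ) : ℤ)) + ((d : ℕ) : ℤ) * ((k : ℕ) : ℤ)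
          = (((k : ℕ) : ℤ) - ((k' : ℕ) : ℤ)) * ((d : ℕ) : ℤ) := by ring
      rw [← mul_assoc, ← zpow_add₀ hζ0, he2]
      ring
    rw [Finset.sum_congr rfl fun k _ => inner k]
    rw [Finset.sum_eq_single k']
    · rw [if_pos ((hdvd_iff k' k').mpr rfl)]
      ring
    · intro k _ hk
      rw [if_neg (fun h => hk ((hdvd_iff k k').mp h)), mul_zero]
    · intro h
      exact absurd (Finset.mem_univ k') h
  -- only the zero frequency survives in the inversion sum
  have keysum : ∀ i : Fin N, ∀ k' : Fin N,
      (N : ℂ) * ((R i k' : ℝ) : ℂ) = S i 0 := by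
    intro i k'
    rw [← key i k']
    rw [Finset.sum_eq_single (⟨0, hN.pos⟩ : Fin N)]
    · norm_num
    · intro d _ hd
      have hdvd : ¬(N : ℤ) ∣ ((d : ℕ) : ℤ) := by
        rw [Int.natCast_dvd_natCast]
        intro hc
        have hd0 : (d : ℕ) = 0 := Nat.eq_zero_of_dvd_of_lt hc d.isLt
        exact hd (Fin.ext hd0)
      rw [hSzero i _ hdvd, mul_zero]
    · intro h
      exact absurd (Finset.mem_univ _) h
  -- conclude
  have hSi0 : ∀ i : Fin N, S i 0 = 0 := by
    intro i
    have := keysum i ⟨0, hN.pos⟩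
    rw [hcol i] at this
    simpa using this.symm
  ext i k
  have := keysum i k
  rw [hSi0 i] at this
  have hR : ((R i k : ℝ) : ℂ) = 0 := by
    rcases mul_eq_zero.mp this with h | h
    · exact absurd h hNC
    · exact h
  simpa using hR
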